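/- arXiv:2408.06692 — 3 statements merged into one kernel-verified Lean document; each statement's English description precedes it below -/
import Mathlib

section
/- Let N ≥ 5 and u ∈ C¹ be positive on B_{r}(x) with |∇(ln u)| ≤ C₀ on B_r(x). Set λ₁ = min{(N-4)/(2C₀), r/2}. Then for every direction θ ∈ S^{N-1}, the function s ↦ s^{(N-4)/2} u(x + sθ) is strictly increasing on (0, λ₁). Consequently, for all 0 < λ ≤ |y - x| < λ₁, the Kelvin reflection satisfies u_{x,λ}(y) := (λ/|y-x|)^{N-4} u(x + λ²(y-x)/|y-x|²) ≤ u(y). -/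
open MeasureTheory Metric Set Filter

noncomputable section

abbrev E (N : ℕ) := EuclideanSpace ℝ (Fin N)

def lap {N : ℕ} (f : E N → ℝ) (x : E N) : ℝ :=
  ∑ i : Fin N, fderiv ℝ (fun y => fderiv ℝ f y (EuclideanSpace.single i 1)) x
    (EuclideanSpace.single i 1)

def capD {N : ℕ} (U Z : Set (E N)) : ℝ :=
  sInf { c | ∃ φ : E N → ℝ, ContDiff ℝ (⊤ : ℕ∞) φ ∧ HasCompactSupport φ ∧ tsupport φ ⊆ U ∧
      (∃ V, IsOpen V ∧ Z ⊆ V ∧ ∀ x ∈ V, 1 ≤ φ x) ∧ c = ∫ x in U, (lap φ x) ^ 2 }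
def invSph {N : ℕ} (x : E N) (l : ℝ) (y : E N) : E N :=
  x + (l ^ 2 * (‖y - x‖ ^ 2)⁻¹) • (y - x)

def Kker {N : ℕ} (x : E N) (l : ℝ) (y z : E N) : ℝ :=
  ‖y - z‖ ^ ((4 : ℝ) - N) - (l / ‖y - x‖) ^ ((N : ℝ) - 4) * ‖invSph x l y - z‖ ^ ((4 : ℝ) - N)
theorem radial_monotonicity_small_spheres {N : ℕ} (hN : 5 ≤ N)
    (x : E N) (r : ℝ) (hr : 0 < r) (C₀ : ℝ) (hC₀ : 0 < C₀)
    (u : E N → ℝ) (hreg : ContDiffOn ℝ 1 u (Metric.ball x r))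
    (hpos : ∀ y ∈ Metric.ball x r, 0 < u y)
    (hgrad : ∀ y ∈ Metric.ball x r, ‖fderiv ℝ u y‖ ≤ C₀ * u y) :
    (∀ θ : E N, ‖θ‖ = 1 →
      StrictMonoOn (fun s : ℝ => s ^ (((N : ℝ) - 4) / 2) * u (x + s • θ))
        (Set.Ioo 0 (min (((N : ℝ) - 4) / (2 * C₀)) (r / 2)))) ∧
    (∀ (l : ℝ) (y : E N), 0 < l → l ≤ ‖y - x‖ →
      ‖y - x‖ < min (((N : ℝ) - 4) / (2 * C₀)) (r / 2) →
      (l / ‖y - x‖) ^ ((N : ℝ) - 4) * u (invSph x l y) ≤ u y) := by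
  have hN5 : (5:ℝ) ≤ (N:ℝ) := by exact_mod_cast hN
  set α : ℝ := ((N:ℝ) - 4) / 2 with hα
  have hαhalf : (1:ℝ)/2 ≤ α := by rw [hα]; linarith
  have hαpos : 0 < α := by linarith
  set lam1 := min (((N : ℝ) - 4) / (2 * C₀)) (r / 2) with hlam1
  have hlr : lam1 ≤ r/2 := min_le_right _ _
  have hlC : lam1 ≤ α / C₀ := by
    have h := min_le_left (((N : ℝ) - 4) / (2 * C₀)) (r / 2)
    rw [hlam1, hα]
    calc min (((N : ℝ) - 4) / (2 * C₀)) (r / 2) ≤ ((N:ℝ) - 4) / (2 * C₀) := h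
      _ = ((N:ℝ) - 4) / 2 / C₀ := by rw [div_div]
  have main : ∀ θ : E N, ‖θ‖ = 1 →
      StrictMonoOn (fun s : ℝ => s ^ α * u (x + s • θ)) (Set.Ioo 0 lam1) := by
    intro θ hθ
    have hmem : ∀ s ∈ Set.Ioo (0:ℝ) lam1, x + s • θ ∈ Metric.ball x r := by
      intro s hs
      rw [Metric.mem_ball, dist_eq_norm]
      have : x + s • θ - x = s • θ := by abel
      rw [this, norm_smul, hθ, Real.norm_eq_abs, abs_of_pos hs.1, mul_one]
      have := hs.2
      linarith [hlr]
    have hderiv : ∀ s ∈ Set.Ioo (0:ℝ) lam1,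
        HasDerivAt (fun s : ℝ => s ^ α * u (x + s • θ))
          ((α * s ^ (α - 1)) * u (x + s • θ) + s ^ α * (fderiv ℝ u (x + s • θ) θ)) s := by
      intro s hs
      have hu : DifferentiableAt ℝ u (x + s • θ) :=
        (hreg.contDiffAt (Metric.isOpen_ball.mem_nhds (hmem s hs))).differentiableAt one_ne_zero
      have hc : HasDerivAt (fun s : ℝ => x + s • θ) θ s := by
        simpa using ((hasDerivAt_id s).smul_const θ).const_add x
      have h2 : HasDerivAt (fun s : ℝ => u (x + s • θ)) (fderiv ℝ u (x + s • θ) θ) s :=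
        hu.hasFDerivAt.comp_hasDerivAt s hc
      exact (Real.hasDerivAt_rpow_const (Or.inl hs.1.ne')).mul h2
    apply strictMonoOn_of_deriv_pos (convex_Ioo _ _)
    · exact fun s hs => ((hderiv s hs).continuousAt).continuousWithinAt
    · intro s hs
      rw [interior_Ioo] at hs
      rw [(hderiv s hs).deriv]
      have hup : 0 < u (x + s • θ) := hpos _ (hmem s hs)
      have hD : |fderiv ℝ u (x + s • θ) θ| ≤ C₀ * u (x + s • θ) := by
        calc |fderiv ℝ u (x + s • θ) θ| = ‖fderiv ℝ u (x + s • θ) θ‖ := rfl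
          _ ≤ ‖fderiv ℝ u (x + s • θ)‖ * ‖θ‖ := (fderiv ℝ u (x + s • θ)).le_opNorm θ
          _ = ‖fderiv ℝ u (x + s • θ)‖ := by rw [hθ, mul_one]
          _ ≤ C₀ * u (x + s • θ) := hgrad _ (hmem s hs)
      have hs1 : 0 < s := hs.1
      have hsC : s * C₀ < α := by
        have h1 : s < α / C₀ := lt_of_lt_of_le hs.2 hlC
        exact (lt_div_iff₀ hC₀).mp h1
      have hkey : 0 < α * u (x + s • θ) + s * fderiv ℝ u (x + s • θ) θ := by
        have h1 : -(C₀ * u (x + s • θ)) ≤ fderiv ℝ u (x + s • θ) θ := neg_le_of_abs_le hD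
        nlinarith
      have hsp : (0:ℝ) < s ^ (α - 1) := Real.rpow_pos_of_pos hs1 _
      have hsa : s ^ α = s ^ (α - 1) * s := by
        rw [show α = α - 1 + 1 by ring, Real.rpow_add_one hs1.ne']
        ring_nf
      rw [hsa]
      nlinarith [mul_pos hsp hkey]
  refine ⟨main, ?_⟩
  intro l y hl hly hlt
  set R := ‖y - x‖ with hR
  have hR0 : 0 < R := lt_of_lt_of_le hl hly
  have hyx : y - x ≠ 0 := by
    intro h
    rw [hR, h, norm_zero] at hR0
    exact lt_irrefl 0 hR0
  set θ := R⁻¹ • (y - x) with hθdef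
  have hθ : ‖θ‖ = 1 := by
    rw [hθdef, norm_smul, norm_inv, Real.norm_eq_abs, abs_of_pos hR0, ← hR]
    field_simp
  set s₂ := l ^ 2 / R with hs₂def
  have hs₂pos : 0 < s₂ := div_pos (pow_pos hl 2) hR0
  have hs₂le : s₂ ≤ R := by
    rw [hs₂def, div_le_iff₀ hR0]
    nlinarith
  have hinv : invSph x l y = x + s₂ • θ := by
    rw [invSph, hθdef, hs₂def, smul_smul, ← hR]
    congr 1
    field_simp
  have hyeq : y = x + R • θ := by
    rw [hθdef, smul_smul]
    rw [mul_inv_cancel₀ hR0.ne', one_smul]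
    abel
  have hmono := (main θ hθ).monotoneOn ⟨hs₂pos, lt_of_le_of_lt hs₂le hlt⟩ ⟨hR0, hlt⟩ hs₂le
  have hpow : (l / R) ^ ((N : ℝ) - 4) = s₂ ^ α / R ^ α := by
    have hlR : (0:ℝ) ≤ l / R := le_of_lt (div_pos hl hR0)
    have h1 : (l / R) ^ ((N : ℝ) - 4) = ((l / R) ^ (2:ℝ)) ^ α := by
      rw [← Real.rpow_mul hlR]
      norm_num
      rw [hα]
      ring_nf
    rw [h1, Real.rpow_two]
    have h2 : (l / R) ^ 2 = s₂ / R := by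
      rw [hs₂def]
      field_simp
    rw [h2, Real.div_rpow hs₂pos.le hR0.le]
  rw [hinv, hpow]
  rw [div_mul_eq_mul_div, div_le_iff₀ (Real.rpow_pos_of_pos hR0 α)]
  calc s₂ ^ α * u (x + s₂ • θ) ≤ R ^ α * u (x + R • θ) := hmono
    _ = u (x + R • θ) * R ^ α := by ring
    _ = u y * R ^ α := by rw [← hyeq]
end
end

section
/- Let N ≥ 5, and suppose u is positive on ℝ^N \ Z (Z null) with u(y) ≥ C|y-x|^{4-N} for |y-x| ≥ λ₁ and u bounded on B_{λ₁}(x) \ Z. Then there exists λ₂ ∈ (0, λ₁) such that for all 0 < λ < λ₂, u_{x,λ}(y) ≤ u(y) for all |y-x| ≥ λ₁, y ∈ ℝ^N \ Z. -/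
open MeasureTheory Metric Set Filter

noncomputable section

theorem moving_sphere_start_far {N : ℕ} (hN : 5 ≤ N)
    (Z : Set (E N)) (hZnull : volume Z = 0)
    (u : E N → ℝ) (hupos : ∀ y ∉ Z, 0 < u y)
    (x : E N) (l₁ : ℝ) (hl₁ : 0 < l₁)
    (C : ℝ) (hC : 0 < C)
    (hlower : ∀ y ∉ Z, l₁ ≤ ‖y - x‖ → C * ‖y - x‖ ^ ((4 : ℝ) - N) ≤ u y)
    (M : ℝ) (hbdd : ∀ y ∈ Metric.ball x l₁ \ Z, u y ≤ M) :
    ∃ l₂ : ℝ, 0 < l₂ ∧ l₂ < l₁ ∧ ∀ l : ℝ, 0 < l → l < l₂ →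
      ∀ y ∉ Z, invSph x l y ∉ Z → l₁ ≤ ‖y - x‖ →
        (l / ‖y - x‖) ^ ((N : ℝ) - 4) * u (invSph x l y) ≤ u y := by
  set a : ℝ := (N : ℝ) - 4 with ha_def
  have ha : (1 : ℝ) ≤ a := by
    have : (5 : ℝ) ≤ (N : ℝ) := by exact_mod_cast hN
    simp only [ha_def]; linarith
  have ha0 : 0 < a := by linarith
  set M' : ℝ := max M 1 with hM'_def
  have hM' : 0 < M' := lt_of_lt_of_le one_pos (le_max_right _ _)
  have hCM' : 0 < C / M' := div_pos hC hM'
  set l₂ : ℝ := min (l₁ / 2) ((C / M') ^ a⁻¹) with hl₂_def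
  refine ⟨l₂, lt_min (by linarith) (Real.rpow_pos_of_pos hCM' _),
    lt_of_le_of_lt (min_le_left _ _) (by linarith), ?_⟩
  intro l hl hll₂ y hyZ hzZ hr
  set r : ℝ := ‖y - x‖ with hr_def
  have hr0 : 0 < r := lt_of_lt_of_le hl₁ hr
  have hll₁ : l < l₁ := lt_of_lt_of_le (lt_of_lt_of_le hll₂ (min_le_left _ _)) (by linarith)
  -- distance of the inverted point
  have hdist : ‖invSph x l y - x‖ = l ^ 2 / r := by
    have : invSph x l y - x = (l ^ 2 * (r ^ 2)⁻¹) • (y - x) := by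
      simp [invSph, hr_def]
    rw [this, norm_smul, Real.norm_eq_abs, abs_of_nonneg (by positivity : (0:ℝ) ≤ l ^ 2 * (r ^ 2)⁻¹), ← hr_def]
    field_simp
  have hball : invSph x l y ∈ Metric.ball x l₁ := by
    rw [Metric.mem_ball, dist_eq_norm, hdist]
    have h1 : l ^ 2 / r ≤ l ^ 2 / l₁ := by
      apply div_le_div_of_nonneg_left (by positivity) hl₁ hr
    have h2 : l ^ 2 / l₁ < l₁ := by
      rw [div_lt_iff₀ hl₁]
      nlinarith
    linarith
  have huz : u (invSph x l y) ≤ M' :=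
    le_trans (hbdd _ ⟨hball, hzZ⟩) (le_max_left _ _)
  -- key power bound : l ^ a * M' ≤ C
  have hla : l ^ a < C / M' := by
    have hlt : l < (C / M') ^ a⁻¹ := lt_of_lt_of_le hll₂ (min_le_right _ _)
    calc l ^ a < ((C / M') ^ a⁻¹) ^ a :=
          Real.rpow_lt_rpow hl.le hlt ha0
      _ = C / M' := by
          rw [← Real.rpow_mul hCM'.le, inv_mul_cancel₀ (ne_of_gt ha0), Real.rpow_one]
  have hkey : l ^ a * M' ≤ C := by
    rw [← le_div_iff₀ hM']
    exact hla.le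
  -- chain of inequalities
  have hpow_pos : (0 : ℝ) < (l / r) ^ a := Real.rpow_pos_of_pos (div_pos hl hr0) _
  have step1 : (l / r) ^ a * u (invSph x l y) ≤ (l / r) ^ a * M' :=
    mul_le_mul_of_nonneg_left huz hpow_pos.le
  have hsplit : (l / r) ^ a = l ^ a * (r ^ a)⁻¹ := by
    rw [Real.div_rpow hl.le hr0.le, div_eq_mul_inv]
  have hrneg : r ^ ((4 : ℝ) - N) = (r ^ a)⁻¹ := by
    have : (4 : ℝ) - N = -a := by rw [ha_def]; ring
    rw [this, Real.rpow_neg hr0.le]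
  have step2 : (l / r) ^ a * M' ≤ C * r ^ ((4 : ℝ) - N) := by
    rw [hsplit, hrneg]
    have hrainv : (0 : ℝ) < (r ^ a)⁻¹ := by
      have := Real.rpow_pos_of_pos hr0 a
      positivity
    calc l ^ a * (r ^ a)⁻¹ * M' = (l ^ a * M') * (r ^ a)⁻¹ := by ring
      _ ≤ C * (r ^ a)⁻¹ := mul_le_mul_of_nonneg_right hkey hrainv.le
  have step3 : C * r ^ ((4 : ℝ) - N) ≤ u y := hlower y hyZ hr
  linarith
end
end

section
/- Let N ≥ 5, 0 < λ̄, and consider K(0,λ; Y, z) = |Y - z|^{4-N} - (λ/|Y|)^{N-4} |λ²Y/|Y|² - z|^{4-N}. Then for |Y| = λ and |z| ≥ λ̄ + 2 > λ, K(0,λ;Y,z) = 0 and Y · ∇_Y K(0,λ;Y,z) = (N-4)|Y - z|^{2-N}(|z|² - |Y|²) > 0. Consequently, for λ̄ ≤ λ ≤ |Y| < λ̄ + 1 and λ̄ + 2 ≤ |z| ≤ M, there are constants 0 < δ₃ ≤ δ₄ < ∞ with δ₃(|Y|-λ)|Y-z|^{4-N} ≤ K(0,λ;Y,z) ≤ δ₄(|Y|-λ)|Y-z|^{4-N}.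 -/
open MeasureTheory Metric Set Filter

noncomputable section

open scoped RealInnerProductSpace

/-- Mean value estimates for `x ↦ x ^ p` with negative exponent. -/
lemma mvt_rpow {p a b : ℝ} (hp : p < 0) (ha : 0 < a) (hab : a ≤ b) :
    (-p) * b ^ (p-1) * (b-a) ≤ a ^ p - b ^ p ∧ a ^ p - b ^ p ≤ (-p) * a ^ (p-1) * (b-a) := by
  rcases eq_or_lt_of_le hab with rfl | hlt
  · simp
  have hb : 0 < b := ha.trans hlt
  obtain ⟨c, hc, hceq⟩ := exists_hasDerivAt_eq_slope (fun x => x ^ p) (fun x => p * x ^ (p-1)) hlt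
    (fun x hx =>
      (Real.continuousAt_rpow_const x p (Or.inl (lt_of_lt_of_le ha hx.1).ne')).continuousWithinAt)
    (fun x hx => Real.hasDerivAt_rpow_const (Or.inl (ha.trans hx.1).ne'))
  have hc0 : 0 < c := ha.trans hc.1
  have key : a ^ p - b ^ p = (-p) * c ^ (p-1) * (b-a) := by
    have hba : b - a ≠ 0 := sub_ne_zero.2 hlt.ne'
    field_simp at hceq
    nlinarith [hceq]
  have h1 : b ^ (p-1) ≤ c ^ (p-1) :=
    Real.rpow_le_rpow_of_nonpos hc0 hc.2.le (by linarith)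
  have h2 : c ^ (p-1) ≤ a ^ (p-1) :=
    Real.rpow_le_rpow_of_nonpos ha hc.1.le (by linarith)
  constructor
  · rw [key]; gcongr <;> linarith
  · rw [key]; gcongr <;> linarith

lemma norm_rpow_eq' {N : ℕ} (q : ℝ) (x : E N) : ‖x‖ ^ (2 * q) = (‖x‖^2) ^ q := by
  rw [← Real.rpow_natCast ‖x‖ 2, ← Real.rpow_mul (norm_nonneg x)]
  norm_num

lemma norm_rpow_eq {N : ℕ} (x : E N) : ‖x‖ ^ ((4:ℝ) - N) = (‖x‖^2) ^ (((4:ℝ) - N)/2) := by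
  rw [← norm_rpow_eq']
  congr 1; ring

lemma Kker_eq {N : ℕ} (l : ℝ) (hl : 0 < l) (Y z : E N) (hY : Y ≠ 0) :
    Kker (0 : E N) l Y z =
      (‖Y - z‖ ^ 2) ^ (((4:ℝ) - N)/2) -
      (l^2 - 2 * ⟪Y, z⟫ + ‖Y‖^2 * ‖z‖^2 / l^2) ^ (((4:ℝ) - N)/2) := by
  have hr : 0 < ‖Y‖ := norm_pos_iff.2 hY
  set p : ℝ := ((4:ℝ) - N)/2 with hp
  set c : ℝ := l^2 * (‖Y‖^2)⁻¹ with hc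
  have hinv : invSph (0 : E N) l Y = c • Y := by
    simp [invSph, hc]
  have hd : (0:ℝ) < l / ‖Y‖ := div_pos hl hr
  have hq : (l/‖Y‖)^((N:ℝ)-4) = (((‖Y‖/l))^2 : ℝ)^p := by
    rw [show ((N:ℝ)-4) = (-2:ℝ)*p by rw [hp]; ring, Real.rpow_mul hd.le]
    congr 1
    rw [show ((-2:ℝ)) = -((2:ℕ):ℝ) by norm_num, Real.rpow_neg hd.le, Real.rpow_natCast,
      ← inv_pow, inv_div]
  have hbase : ((‖Y‖/l))^2 * ‖c • Y - z‖^2 = l^2 - 2 * ⟪Y, z⟫ + ‖Y‖^2 * ‖z‖^2 / l^2 := by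
    rw [norm_sub_sq_real, real_inner_smul_left, norm_smul]
    rw [hc]
    have h1 : ‖Y‖ ≠ 0 := hr.ne'
    have h2 : l ≠ 0 := hl.ne'
    rw [Real.norm_eq_abs, abs_of_pos (by positivity)]
    field_simp
  rw [Kker, hinv, sub_zero, norm_rpow_eq, norm_rpow_eq, hq,
    ← Real.mul_rpow (by positivity) (by positivity), hbase]

lemma hasFDerivAt_F {N : ℕ} (l : ℝ) (Y z : E N) (p : ℝ)
    (hA : ‖Y - z‖^2 ≠ 0) (hB : l^2 - 2 * ⟪Y, z⟫ + ‖Y‖^2 * ‖z‖^2 / l^2 ≠ 0) :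
    HasFDerivAt (fun Y' : E N => (‖Y' - z‖ ^ 2) ^ p -
        (l^2 - 2 * ⟪Y', z⟫ + ‖Y'‖^2 * ‖z‖^2 / l^2) ^ p)
      ((p * (‖Y - z‖^2) ^ (p-1)) •
          ((fderivInnerCLM ℝ (Y - z, Y - z)).comp
            ((ContinuousLinearMap.id ℝ (E N)).prod (ContinuousLinearMap.id ℝ (E N)))) -
        (p * (l^2 - 2 * ⟪Y, z⟫ + ‖Y‖^2 * ‖z‖^2 / l^2) ^ (p-1)) •
          (0 - (2:ℝ) • ((fderivInnerCLM ℝ (Y, z)).comp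
              ((ContinuousLinearMap.id ℝ (E N)).prod (0 : E N →L[ℝ] E N))) +
            (‖z‖^2 / l^2) • ((fderivInnerCLM ℝ (Y, Y)).comp
              ((ContinuousLinearMap.id ℝ (E N)).prod (ContinuousLinearMap.id ℝ (E N)))))) Y := by
  have hsub : HasFDerivAt (fun Y' : E N => Y' - z) (ContinuousLinearMap.id ℝ (E N)) Y :=
    (hasFDerivAt_id Y).sub_const z
  have ha : HasFDerivAt (fun Y' : E N => ‖Y' - z‖^2)
      ((fderivInnerCLM ℝ (Y - z, Y - z)).comp
        ((ContinuousLinearMap.id ℝ (E N)).prod (ContinuousLinearMap.id ℝ (E N)))) Y := by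
    have h : (fun Y' : E N => ‖Y' - z‖^2) = fun Y' : E N => ⟪Y' - z, Y' - z⟫ :=
      funext fun x => (real_inner_self_eq_norm_sq _).symm
    rw [h]; exact hsub.inner ℝ hsub
  have ht : HasFDerivAt (fun Y' : E N => ⟪Y', z⟫)
      ((fderivInnerCLM ℝ (Y, z)).comp
        ((ContinuousLinearMap.id ℝ (E N)).prod (0 : E N →L[ℝ] E N))) Y :=
    (hasFDerivAt_id Y).inner ℝ (hasFDerivAt_const z Y)
  have hn : HasFDerivAt (fun Y' : E N => ‖Y'‖^2)
      ((fderivInnerCLM ℝ (Y, Y)).comp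
        ((ContinuousLinearMap.id ℝ (E N)).prod (ContinuousLinearMap.id ℝ (E N)))) Y := by
    have h : (fun Y' : E N => ‖Y'‖^2) = fun Y' : E N => ⟪Y', Y'⟫ :=
      funext fun x => (real_inner_self_eq_norm_sq _).symm
    rw [h]; exact (hasFDerivAt_id Y).inner ℝ (hasFDerivAt_id Y)
  have hb : HasFDerivAt (fun Y' : E N => l^2 - 2 * ⟪Y', z⟫ + ‖Y'‖^2 * ‖z‖^2 / l^2)
      (0 - (2:ℝ) • ((fderivInnerCLM ℝ (Y, z)).comp
          ((ContinuousLinearMap.id ℝ (E N)).prod (0 : E N →L[ℝ] E N))) +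
        (‖z‖^2 / l^2) • ((fderivInnerCLM ℝ (Y, Y)).comp
          ((ContinuousLinearMap.id ℝ (E N)).prod (ContinuousLinearMap.id ℝ (E N))))) Y := by
    simp only [mul_div_assoc]
    exact ((hasFDerivAt_const (l^2) Y).sub (ht.const_mul 2)).add (hn.mul_const _)
  exact (ha.rpow_const (Or.inl hA)).sub (hb.rpow_const (Or.inl hB))

set_option maxHeartbeats 1000000 in
theorem Kker_boundary_behavior {N : ℕ} (hN : 5 ≤ N) (lb : ℝ) (hlb : 0 < lb) :
    (∀ (l : ℝ) (Y z : E N), lb ≤ l → l < lb + 1 → ‖Y‖ = l → lb + 2 ≤ ‖z‖ →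
      Kker (0 : E N) l Y z = 0 ∧
      fderiv ℝ (fun Y' => Kker (0 : E N) l Y' z) Y Y =
        ((N : ℝ) - 4) * ‖Y - z‖ ^ ((2 : ℝ) - N) * (‖z‖ ^ 2 - ‖Y‖ ^ 2) ∧
      0 < fderiv ℝ (fun Y' => Kker (0 : E N) l Y' z) Y Y) ∧
    (∀ M : ℝ, lb + 2 < M → ∃ δ₃ δ₄ : ℝ, 0 < δ₃ ∧ δ₃ ≤ δ₄ ∧
      ∀ (l : ℝ) (Y z : E N), lb ≤ l → l ≤ ‖Y‖ → ‖Y‖ < lb + 1 →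
        lb + 2 ≤ ‖z‖ → ‖z‖ ≤ M →
        δ₃ * (‖Y‖ - l) * ‖Y - z‖ ^ ((4 : ℝ) - N) ≤ Kker (0 : E N) l Y z ∧
        Kker (0 : E N) l Y z ≤ δ₄ * (‖Y‖ - l) * ‖Y - z‖ ^ ((4 : ℝ) - N)) := by
  have hN5 : (5:ℝ) ≤ (N:ℝ) := by exact_mod_cast hN
  set p : ℝ := ((4:ℝ) - N)/2 with hpdef
  have hp : p < 0 := by rw [hpdef]; linarith
  constructor
  · -- Part 1
    intro l Y z hlbl hl1 hYl hz
    have hl : 0 < l := lt_of_lt_of_le hlb hlbl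
    have hr : 0 < ‖Y‖ := by rw [hYl]; exact hl
    have hY : Y ≠ 0 := norm_pos_iff.1 hr
    have hzY : 1 ≤ ‖Y - z‖ := by
      have h1 : ‖z‖ - ‖Y‖ ≤ ‖z - Y‖ := norm_sub_norm_le z Y
      rw [norm_sub_rev] at h1
      rw [hYl] at *
      linarith
    have hApos : (0:ℝ) < ‖Y - z‖^2 := by positivity
    have hBA : l^2 - 2 * ⟪Y, z⟫ + ‖Y‖^2 * ‖z‖^2 / l^2 = ‖Y - z‖^2 := by
      rw [norm_sub_sq_real, hYl]
      field_simp
    have hK0 : Kker (0 : E N) l Y z = 0 := by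
      rw [Kker_eq l hl Y z hY, hBA, sub_self]
    have hKF : (fun Y' => Kker (0 : E N) l Y' z) =ᶠ[nhds Y]
        (fun Y' : E N => (‖Y' - z‖ ^ 2) ^ p -
          (l^2 - 2 * ⟪Y', z⟫ + ‖Y'‖^2 * ‖z‖^2 / l^2) ^ p) := by
      filter_upwards [(isOpen_compl_singleton (x := (0 : E N))).mem_nhds hY] with x hx
      exact Kker_eq l hl x z hx
    have hF := hasFDerivAt_F l Y z p hApos.ne' (by rw [hBA]; exact hApos.ne')
    have hfd : fderiv ℝ (fun Y' => Kker (0 : E N) l Y' z) Y = fderiv ℝ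
        (fun Y' : E N => (‖Y' - z‖ ^ 2) ^ p -
          (l^2 - 2 * ⟪Y', z⟫ + ‖Y'‖^2 * ‖z‖^2 / l^2) ^ p) Y := hKF.fderiv_eq
    have hval : fderiv ℝ (fun Y' => Kker (0 : E N) l Y' z) Y Y =
        ((N : ℝ) - 4) * ‖Y - z‖ ^ ((2 : ℝ) - N) * (‖z‖ ^ 2 - ‖Y‖ ^ 2) := by
      rw [hfd, hF.fderiv]
      have hq : (‖Y - z‖^2) ^ (p - 1) = ‖Y - z‖ ^ ((2:ℝ) - N) := by
        rw [← norm_rpow_eq']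
        congr 1
        rw [hpdef]; ring
      simp only [ContinuousLinearMap.sub_apply, ContinuousLinearMap.smul_apply,
        ContinuousLinearMap.comp_apply, ContinuousLinearMap.prod_apply,
        ContinuousLinearMap.coe_id', id_eq, ContinuousLinearMap.zero_apply,
        ContinuousLinearMap.add_apply, fderivInnerCLM_apply, smul_eq_mul,
        inner_zero_right, inner_sub_left, inner_sub_right]
      rw [hBA, hq, real_inner_self_eq_norm_sq, real_inner_comm z Y, hYl, hpdef]
      field_simp
      ring
    refine ⟨hK0, hval, ?_⟩
    rw [hval]
    have h1 : (0:ℝ) < (N:ℝ) - 4 := by linarith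
    have h2 : (0:ℝ) < ‖Y - z‖ ^ ((2:ℝ) - N) := Real.rpow_pos_of_pos (by linarith) _
    have h3 : (0:ℝ) < ‖z‖^2 - ‖Y‖^2 := by
      rw [hYl]
      have h4 : l^2 < ‖z‖^2 := by
        apply pow_lt_pow_left₀ (show l < ‖z‖ by linarith) hl.le
        norm_num
      linarith
    positivity
  · -- Part 2
    intro M hM
    have hM0 : 0 < M := by linarith
    set Bmax : ℝ := (lb+1+M)^2 + (lb+1)^2*M^2/lb^2 with hBmaxdef
    have hBmax : 0 < Bmax := by positivity
    have hnp : 0 < -p := by linarith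
    set d3 : ℝ := (-p) * Bmax^(p-1) * ((2*lb) * (2*lb+3) / (lb+1)^2) with hd3def
    set d4 : ℝ := (-p) * ((2*(lb+1)) * M^2 / lb^2) with hd4def
    have hd3 : 0 < d3 := by
      have := Real.rpow_pos_of_pos hBmax (p-1)
      apply mul_pos (mul_pos hnp this)
      positivity
    have hd4 : 0 < d4 := by
      apply mul_pos hnp
      positivity
    refine ⟨min d3 d4, max d3 d4, lt_min hd3 hd4, (min_le_left _ _).trans (le_max_left _ _), ?_⟩
    intro l Y z hlbl hlr hr1 hzlb hzM
    have hl : 0 < l := lt_of_lt_of_le hlb hlbl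
    have hr : 0 < ‖Y‖ := lt_of_lt_of_le hl hlr
    have hY : Y ≠ 0 := norm_pos_iff.1 hr
    have hll1 : l < lb + 1 := lt_of_le_of_lt hlr hr1
    have hzY : 1 ≤ ‖Y - z‖ := by
      have h1 : ‖z‖ - ‖Y‖ ≤ ‖z - Y‖ := norm_sub_norm_le z Y
      rw [norm_sub_rev] at h1
      linarith
    have hzYub : ‖Y - z‖ ≤ lb + 1 + M := by
      have := norm_sub_le Y z
      linarith
    set A : ℝ := ‖Y - z‖^2 with hAdef
    set B : ℝ := l^2 - 2 * ⟪Y, z⟫ + ‖Y‖^2 * ‖z‖^2 / l^2 with hBdef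
    have hA1 : 1 ≤ A := by
      rw [hAdef]
      simpa using pow_le_pow_left₀ zero_le_one hzY 2
    have hApos : (0:ℝ) < A := by linarith
    have hAub : A ≤ (lb+1+M)^2 := by
      rw [hAdef]
      exact pow_le_pow_left₀ (norm_nonneg _) hzYub 2
    have hAt : A = ‖Y‖^2 - 2*⟪Y,z⟫ + ‖z‖^2 := by rw [hAdef, norm_sub_sq_real]
    have hBA : B - A = (‖Y‖ - l) * ((‖Y‖ + l) * ((‖z‖^2 - l^2) / l^2)) := by
      rw [hBdef, hAt]
      field_simp
      ring
    have hsl : 2*lb + 3 ≤ ‖z‖^2 - l^2 := by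
      have h1 : (lb+2)^2 ≤ ‖z‖^2 := pow_le_pow_left₀ (by linarith) hzlb 2
      have h2 : l^2 ≤ (lb+1)^2 := pow_le_pow_left₀ hl.le hll1.le 2
      have h3 : (lb+2)^2 - (lb+1)^2 = 2*lb+3 := by ring
      linarith
    have hsl0 : 0 ≤ ‖z‖^2 - l^2 := by linarith
    have hrl0 : 0 ≤ ‖Y‖ - l := by linarith
    have hBA0 : 0 ≤ B - A := by
      rw [hBA]
      have h2 : 0 ≤ (‖z‖^2 - l^2)/l^2 := div_nonneg hsl0 (by positivity)
      exact mul_nonneg hrl0 (mul_nonneg (by linarith) h2)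
    have hAB : A ≤ B := by linarith
    have hll2 : l^2 ≤ (lb+1)^2 := pow_le_pow_left₀ hl.le hll1.le 2
    have he2 : ‖Y‖^2 - l^2 ≤ (lb+1)^2 := by
      have h1 : ‖Y‖^2 ≤ (lb+1)^2 := pow_le_pow_left₀ (norm_nonneg Y) hr1.le 2
      have h2 : (0:ℝ) ≤ l^2 := sq_nonneg l
      linarith
    have he3 : ‖z‖^2 - l^2 ≤ M^2 := by
      have h1 : ‖z‖^2 ≤ M^2 := pow_le_pow_left₀ (norm_nonneg z) hzM 2
      have h2 : (0:ℝ) ≤ l^2 := sq_nonneg l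
      linarith
    have hllb2 : lb^2 ≤ l^2 := pow_le_pow_left₀ hlb.le hlbl 2
    have hBub : B ≤ Bmax := by
      have hnum : (‖Y‖ - l) * ((‖Y‖ + l) * (‖z‖^2 - l^2)) ≤ (lb+1)^2 * M^2 := by
        have e1 : (‖Y‖ - l) * ((‖Y‖ + l) * (‖z‖^2 - l^2)) = (‖Y‖^2 - l^2)*(‖z‖^2 - l^2) := by
          ring
        rw [e1]
        exact mul_le_mul he2 he3 hsl0 (by positivity)
      have h2 : B - A ≤ (lb+1)^2*M^2/lb^2 := by
        rw [hBA]
        have hrw : (‖Y‖ - l) * ((‖Y‖ + l) * ((‖z‖^2 - l^2) / l^2))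
            = ((‖Y‖ - l) * ((‖Y‖ + l) * (‖z‖^2 - l^2))) / l^2 := by ring
        rw [hrw]
        exact div_le_div₀ (by positivity) hnum (by positivity) hllb2
      rw [hBmaxdef]
      linarith
    have hBpos : 0 < B := lt_of_lt_of_le hApos hAB
    have hK : Kker (0 : E N) l Y z = A ^ p - B ^ p := by
      rw [Kker_eq l hl Y z hY, hAdef, hBdef, hpdef]
    have hmvt := mvt_rpow hp hApos hAB
    have hApow : ‖Y - z‖ ^ ((4:ℝ) - N) = A ^ p := by
      rw [hAdef, hpdef]; exact norm_rpow_eq (Y - z)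
    have hAppos : 0 < A ^ p := Real.rpow_pos_of_pos hApos _
    have hAp1 : A ^ p ≤ 1 := Real.rpow_le_one_of_one_le_of_nonpos hA1 hp.le
    constructor
    · -- lower bound
      rw [hApow, hK]
      have step1 : (-p) * Bmax^(p-1) * (B - A) ≤ (-p) * B^(p-1) * (B - A) := by
        have h := Real.rpow_le_rpow_of_nonpos hBpos hBub (by linarith : p - 1 ≤ 0)
        exact mul_le_mul_of_nonneg_right (mul_le_mul_of_nonneg_left h hnp.le) hBA0
      have hq1 : (2*lb)*(2*lb+3)/(lb+1)^2 ≤ (‖Y‖+l)*(‖z‖^2-l^2)/l^2 := by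
        apply div_le_div₀ (by positivity) ?_ (by positivity) ?_
        · exact mul_le_mul (by linarith) hsl (by linarith) (by linarith)
        · exact hll2
      have hBA_lb : (‖Y‖ - l) * ((2*lb)*(2*lb+3)/(lb+1)^2) ≤ B - A := by
        rw [hBA]
        calc (‖Y‖ - l) * ((2*lb)*(2*lb+3)/(lb+1)^2)
            ≤ (‖Y‖ - l) * ((‖Y‖+l)*(‖z‖^2-l^2)/l^2) :=
              mul_le_mul_of_nonneg_left hq1 hrl0
          _ = (‖Y‖ - l) * ((‖Y‖ + l) * ((‖z‖^2 - l^2) / l^2)) := by ring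
      have step2 : d3 * (‖Y‖ - l) ≤ (-p) * Bmax^(p-1) * (B - A) := by
        have hpos : 0 ≤ (-p) * Bmax^(p-1) := by positivity
        calc d3 * (‖Y‖ - l)
            = (-p) * Bmax^(p-1) * ((‖Y‖ - l) * ((2*lb)*(2*lb+3)/(lb+1)^2)) := by
              rw [hd3def]; ring
          _ ≤ (-p) * Bmax^(p-1) * (B - A) := mul_le_mul_of_nonneg_left hBA_lb hpos
      have step3 : min d3 d4 * (‖Y‖ - l) * (A ^ p) ≤ d3 * (‖Y‖ - l) := by
        have h1 : min d3 d4 * (‖Y‖ - l) ≤ d3 * (‖Y‖ - l) :=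
          mul_le_mul_of_nonneg_right (min_le_left _ _) hrl0
        have h0 : 0 ≤ min d3 d4 * (‖Y‖ - l) :=
          mul_nonneg (le_of_lt (lt_min hd3 hd4)) hrl0
        calc min d3 d4 * (‖Y‖ - l) * (A ^ p)
            ≤ min d3 d4 * (‖Y‖ - l) * 1 := mul_le_mul_of_nonneg_left hAp1 h0
          _ = min d3 d4 * (‖Y‖ - l) := mul_one _
          _ ≤ d3 * (‖Y‖ - l) := h1
      linarith [hmvt.1]
    · -- upper bound
      rw [hApow, hK]
      have hApm : A ^ (p-1) ≤ A ^ p := by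
        have hinv : A⁻¹ ≤ 1 := by
          rw [← one_div]
          exact div_le_one_of_le₀ hA1 hApos.le
        rw [show p - 1 = p + (-1) by ring, Real.rpow_add hApos, Real.rpow_neg_one]
        calc A ^ p * A⁻¹ ≤ A ^ p * 1 := mul_le_mul_of_nonneg_left hinv hAppos.le
          _ = A ^ p := mul_one _
      have hq2 : (‖Y‖+l)*(‖z‖^2-l^2)/l^2 ≤ (2*(lb+1))*M^2/lb^2 := by
        apply div_le_div₀ (by positivity) ?_ (by positivity) hllb2
        exact mul_le_mul (by linarith) he3 hsl0 (by positivity)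
      have hBAub : B - A ≤ (‖Y‖ - l) * ((2*(lb+1))*M^2/lb^2) := by
        rw [hBA]
        calc (‖Y‖ - l) * ((‖Y‖ + l) * ((‖z‖^2 - l^2) / l^2))
            = (‖Y‖ - l) * ((‖Y‖+l)*(‖z‖^2-l^2)/l^2) := by ring
          _ ≤ (‖Y‖ - l) * ((2*(lb+1))*M^2/lb^2) := mul_le_mul_of_nonneg_left hq2 hrl0
      have step : A ^ p - B ^ p ≤ (-p) * (A ^ p) * ((‖Y‖ - l) * ((2*(lb+1))*M^2/lb^2)) := by
        calc A ^ p - B ^ p ≤ (-p) * A^(p-1) * (B - A) := hmvt.2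
          _ ≤ (-p) * (A ^ p) * ((‖Y‖ - l) * ((2*(lb+1))*M^2/lb^2)) := by
              apply mul_le_mul (mul_le_mul_of_nonneg_left hApm hnp.le) hBAub hBA0
              positivity
      calc A ^ p - B ^ p ≤ d4 * (‖Y‖ - l) * (A ^ p) := by
            refine step.trans (le_of_eq ?_)
            rw [hd4def]; ring
        _ ≤ max d3 d4 * (‖Y‖ - l) * (A ^ p) :=
            mul_le_mul_of_nonneg_right
              (mul_le_mul_of_nonneg_right (le_max_right d3 d4) hrl0) hAppos.le
end
end
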